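/- arXiv:math/0312521 — 3 statements merged into one kernel-verified Lean document; each statement's English description precedes it below -/
import Mathlib

section
/- Let ρ : G → GL₃(K) be an absolutely irreducible representation of a group G over a field K of characteristic not 2, and let γ be an involution of G extended by an element A ∈ GL₃(K) satisfying ρ(γ g γ⁻¹) = A · (ρ(g)ᵀ)⁻¹ · A⁻¹ for all g ∈ G. Then A is symmetric, i.e. Aᵀ = A. -/
/-!
Applying the twisted self-duality twice and using `γ² = 1` shows that `A (A⁻¹)ᵀ` commutes with
every `ρ g`, so by Schur `A (A⁻¹)ᵀ = c • 1`, i.e. `Aᵀ = c • A`. Transposing once more gives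
`c² = 1`, and taking determinants gives `c³ = 1`; hence `c = 1`.
-/

open Matrix

theorem commute_mul_of_eq_conj_of_eq_conj {H : Type*} [Group H] (θ : H →* H)
    (hθ : ∀ h, θ (θ h) = h) {a x y : H} (hy : y = a * θ x * a⁻¹) (hx : x = a * θ y * a⁻¹) :
    Commute (a * θ a) x := by
  rw [hy, map_mul, map_mul, map_inv, hθ] at hx
  rw [commute_iff_eq]
  nth_rewrite 2 [hx]
  group

theorem Matrix.transpose_eq_self_of_transpose_eq_smul {ι R : Type*} [Fintype ι] [DecidableEq ι]
    [CommRing R] (hι : Odd (Fintype.card ι)) {A : Matrix ι ι R} (hA : IsUnit A.det) {c : R}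
    (h : Aᵀ = c • A) : Aᵀ = A := by
  obtain ⟨i⟩ : Nonempty ι := Fintype.card_pos_iff.mp hι.pos
  have hpow : c ^ Fintype.card ι = 1 := by
    have := det_transpose A
    rwa [h, det_smul, hA.isRegular.right.mul_right_eq_self_iff] at this
  have hsq : c * c = 1 := by
    have : (c * c) • (1 : Matrix ι ι R) * A = A := by
      rw [smul_one_mul, ← smul_smul, ← h, ← transpose_smul, ← h, transpose_transpose]
    rw [((isUnit_iff_isUnit_det A).mpr hA).isRegular.right.mul_right_eq_self_iff] at this
    simpa using congrFun₂ this i i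
  obtain ⟨k, hk⟩ := hι
  have hc : c = 1 := by
    rwa [hk, pow_succ, pow_mul, sq, hsq, one_pow, one_mul] at hpow
  rw [h, hc, one_smul]

namespace Matrix.GeneralLinearGroup

variable {ι R : Type*} [Fintype ι] [DecidableEq ι] [CommRing R]

def transposeInv : GL ι R →* GL ι R where
  toFun u := ⟨(↑u⁻¹ : Matrix ι ι R)ᵀ, (u : Matrix ι ι R)ᵀ,
    by rw [← transpose_mul, Units.mul_inv, transpose_one],
    by rw [← transpose_mul, Units.inv_mul, transpose_one]⟩
  map_one' := by ext1; simp
  map_mul' u v := by ext1; simp [transpose_mul]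

@[simp]
theorem coe_transposeInv (u : GL ι R) :
    (transposeInv u : Matrix ι ι R) = (↑u⁻¹ : Matrix ι ι R)ᵀ := rfl

theorem transposeInv_transposeInv (u : GL ι R) : transposeInv (transposeInv u) = u := by
  ext1; exact transpose_transpose (u : Matrix ι ι R)

theorem transpose_eq_smul_of_mul_transposeInv_eq_smul_one {u : GL ι R} {c : R}
    (h : (↑(u * transposeInv u) : Matrix ι ι R) = c • 1) :
    (u : Matrix ι ι R)ᵀ = c • (u : Matrix ι ι R) := by
  have hu : (u : Matrix ι ι R) = c • (u : Matrix ι ι R)ᵀ :=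
    calc (u : Matrix ι ι R) = u * (↑u * ↑u⁻¹ : Matrix ι ι R)ᵀ := by simp
      _ = ↑(u * transposeInv u) * (u : Matrix ι ι R)ᵀ := by
        rw [Units.val_mul, coe_transposeInv, transpose_mul, mul_assoc]
      _ = c • (u : Matrix ι ι R)ᵀ := by rw [h, smul_one_mul]
  simpa only [transpose_smul, transpose_transpose] using congrArg transpose hu

end Matrix.GeneralLinearGroup

theorem stmt0_general {G : Type*} [Group G] {K : Type*} [Field K]
    (ρ : G →* Matrix.GeneralLinearGroup (Fin 3) K)
    (hschur : ∀ M : Matrix (Fin 3) (Fin 3) K,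
      (∀ g : G, M * (ρ g : Matrix (Fin 3) (Fin 3) K) = (ρ g : Matrix (Fin 3) (Fin 3) K) * M) →
      ∃ c : K, M = c • (1 : Matrix (Fin 3) (Fin 3) K))
    (γ : G ≃* G) (hγ : ∀ g : G, γ (γ g) = g)
    (A : (Matrix (Fin 3) (Fin 3) K)ˣ)
    (hA : ∀ g : G, (ρ (γ g) : Matrix (Fin 3) (Fin 3) K) =
      (A : Matrix (Fin 3) (Fin 3) K) *
        ((((ρ g)⁻¹ : Matrix.GeneralLinearGroup (Fin 3) K) : Matrix (Fin 3) (Fin 3) K))ᵀ *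
        ((A⁻¹ : (Matrix (Fin 3) (Fin 3) K)ˣ) : Matrix (Fin 3) (Fin 3) K)) :
    (A : Matrix (Fin 3) (Fin 3) K)ᵀ = (A : Matrix (Fin 3) (Fin 3) K) := by
  have hconj (g : G) : ρ (γ g) = A * GeneralLinearGroup.transposeInv (ρ g) * A⁻¹ :=
    Units.ext (hA g)
  have hcomm (g : G) : Commute (A * GeneralLinearGroup.transposeInv A) (ρ g) :=
    commute_mul_of_eq_conj_of_eq_conj _ GeneralLinearGroup.transposeInv_transposeInv (hconj g)
      (by simpa only [hγ] using hconj (γ g))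
  obtain ⟨c, hc⟩ := hschur _ fun g => Units.ext_iff.mp (hcomm g).eq
  exact transpose_eq_self_of_transpose_eq_smul (by decide) (isUnits_det_units A)
    (GeneralLinearGroup.transpose_eq_smul_of_mul_transposeInv_eq_smul_one hc)

/-- If `ρ : G → GL₃(K)` is absolutely irreducible (its commutant consists of scalars),
`γ` an involution of `G`, and `A ∈ GL₃(K)` satisfies
`ρ(γ g) = A ⬝ ᵗρ(g)⁻¹ ⬝ A⁻¹` for all `g`, then `A` is symmetric. -/
theorem stmt0 {G : Type*} [Group G] {K : Type*} [Field K] (h2 : (2 : K) ≠ 0)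
    (ρ : G →* Matrix.GeneralLinearGroup (Fin 3) K)
    (hschur : ∀ M : Matrix (Fin 3) (Fin 3) K,
      (∀ g : G, M * (ρ g : Matrix (Fin 3) (Fin 3) K) = (ρ g : Matrix (Fin 3) (Fin 3) K) * M) →
      ∃ c : K, M = c • (1 : Matrix (Fin 3) (Fin 3) K))
    (γ : G ≃* G) (hγ : ∀ g : G, γ (γ g) = g)
    (A : (Matrix (Fin 3) (Fin 3) K)ˣ)
    (hA : ∀ g : G, (ρ (γ g) : Matrix (Fin 3) (Fin 3) K) =
      (A : Matrix (Fin 3) (Fin 3) K) *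
        ((((ρ g)⁻¹ : Matrix.GeneralLinearGroup (Fin 3) K) : Matrix (Fin 3) (Fin 3) K))ᵀ *
        ((A⁻¹ : (Matrix (Fin 3) (Fin 3) K)ˣ) : Matrix (Fin 3) (Fin 3) K)) :
    (A : Matrix (Fin 3) (Fin 3) K)ᵀ = (A : Matrix (Fin 3) (Fin 3) K) :=
  stmt0_general ρ hschur γ hγ A hA
end

section
/- In the setting of the previous statement, if additionally f is not divisible by the uniformizer (f ∉ μM) and n ≥ 1, then P f is also not divisible (P f ∉ μM). -/
/-! Since `T f - b • f` lies in `ker (T - a)` and `T f - a • f` in `ker (T - b)`, and their difference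
is `(a - b) • f`, the projection satisfies `(a - b) • P f = T f - b • f`. Hence if `P f ∈ μM`, then
`(a - b) • f = (a - b) • P f - (T f - a • f) ∈ μM`, and `f ∈ μM` because `a - b` is a unit. -/

namespace LinearMap

variable {R M : Type*} [CommRing R] [AddCommGroup M] [Module R M]

theorem sub_smul_id_comp_comm (T : M →ₗ[R] M) (a b : R) :
    (T - b • id) ∘ₗ (T - a • id) = (T - a • id) ∘ₗ (T - b • id) := by
  ext x
  simp only [comp_apply, sub_apply, smul_apply, id_apply, map_sub, map_smul, smul_sub, smul_comm a b]
  abel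

variable {T P : M →ₗ[R] M} {a b : R}

theorem sub_smul_projection_apply
    (hT : (T - a • id) ∘ₗ (T - b • id) = 0)
    (hPa : ∀ x ∈ ker (T - a • id), P x = x) (hPb : ∀ x ∈ ker (T - b • id), P x = 0) (f : M) :
    (a - b) • P f = T f - b • f := by
  have hka : T f - b • f ∈ ker (T - a • id) := by
    simpa using DFunLike.congr_fun hT f
  have hkb : T f - a • f ∈ ker (T - b • id) := by
    simpa using DFunLike.congr_fun ((sub_smul_id_comp_comm T a b).trans hT) f
  have hdecomp : (a - b) • f = (T f - b • f) - (T f - a • f) := by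
    rw [sub_smul]
    abel
  rw [← map_smul, hdecomp, map_sub, hPa _ hka, hPb _ hkb, sub_zero]

theorem projection_apply_notMem_of_sub_smul_mem (hab : IsUnit (a - b))
    (hT : (T - a • id) ∘ₗ (T - b • id) = 0)
    (hPa : ∀ x ∈ ker (T - a • id), P x = x) (hPb : ∀ x ∈ ker (T - b • id), P x = 0)
    {N : Submodule R M} {f : M} (hf : T f - a • f ∈ N) (hfN : f ∉ N) : P f ∉ N := by
  intro hPf
  have hsmul : (a - b) • f = (a - b) • P f - (T f - a • f) := by
    rw [sub_smul_projection_apply hT hPa hPb, sub_smul]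
    abel
  refine hfN ((N.smul_mem_iff_of_isUnit hab).mp ?_)
  rw [hsmul]
  exact N.sub_mem (N.smul_mem _ hPf) hf

end LinearMap

theorem stmt8_general {O : Type*} [CommRing O] [IsDomain O] [IsDiscreteValuationRing O]
    {M : Type*} [AddCommGroup M] [Module O M]
    (T : M →ₗ[O] M) (a b : O) (hab : IsUnit (a - b))
    (hT : (T - a • LinearMap.id) ∘ₗ (T - b • LinearMap.id) = 0)
    (P : M →ₗ[O] M)
    (hPa : ∀ x ∈ LinearMap.ker (T - a • LinearMap.id), P x = x)
    (hPb : ∀ x ∈ LinearMap.ker (T - b • LinearMap.id), P x = 0)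
    (n : ℕ) (hn : 1 ≤ n) (f : M)
    (hf : T f - a • f ∈ (IsLocalRing.maximalIdeal O ^ n) • (⊤ : Submodule O M))
    (hfnd : f ∉ (IsLocalRing.maximalIdeal O) • (⊤ : Submodule O M)) :
    P f ∉ (IsLocalRing.maximalIdeal O) • (⊤ : Submodule O M) :=
  LinearMap.projection_apply_notMem_of_sub_smul_mem hab hT hPa hPb
    (Submodule.smul_mono_left (Ideal.pow_le_self (by omega)) hf) hfnd

/-- In the setting of the previous statement, if moreover `f ∉ μM` and `n ≥ 1`,
then `Pf ∉ μM`. -/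
theorem stmt8 {O : Type*} [CommRing O] [IsDomain O] [IsDiscreteValuationRing O]
    {M : Type*} [AddCommGroup M] [Module O M] [Module.Free O M] [Module.Finite O M]
    (T : M →ₗ[O] M) (a b : O) (hab : IsUnit (a - b))
    (hT : (T - a • LinearMap.id) ∘ₗ (T - b • LinearMap.id) = 0)
    (P : M →ₗ[O] M)
    (hPa : ∀ x ∈ LinearMap.ker (T - a • LinearMap.id), P x = x)
    (hPb : ∀ x ∈ LinearMap.ker (T - b • LinearMap.id), P x = 0)
    (n : ℕ) (hn : 1 ≤ n) (f : M)
    (hf : T f - a • f ∈ (IsLocalRing.maximalIdeal O ^ n) • (⊤ : Submodule O M))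
    (hfnd : f ∉ (IsLocalRing.maximalIdeal O) • (⊤ : Submodule O M)) :
    P f ∉ (IsLocalRing.maximalIdeal O) • (⊤ : Submodule O M) :=
  stmt8_general T a b hab hT P hPa hPb n hn f hf hfnd
end

section
/- Let O be a DVR with maximal ideal μ and uniformizer π, let N be a finite free O-module, let H be a commutative ring acting O-linearly on N, and let ψ : H → O be a ring homomorphism. Suppose f ∈ N satisfies U f ≡ ψ(U) f mod μⁿ N for every U ∈ H, and moreover f ∉ μN. Then the map H → O/μⁿ, U ↦ ψ(U) mod μⁿ, factors through the image algebra T = im(H → End_O(N)). -/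
lemma mem_ideal_smul_top_iff_repr {O : Type*} [CommRing O] {N : Type*} [AddCommGroup N]
    [Module O N] {ι : Type*} [Fintype ι] (b : Module.Basis ι O N) (I : Ideal O) (x : N) :
    x ∈ I • (⊤ : Submodule O N) ↔ ∀ i, b.repr x i ∈ I := by
  constructor
  · intro hx i
    refine Submodule.smul_induction_on hx ?_ ?_
    · intro r hr m _
      simp only [map_smul, Finsupp.smul_apply, smul_eq_mul]
      exact I.mul_mem_right _ hr
    · intro y z hy hz
      simpa using I.add_mem hy hz
  · intro h
    have := b.sum_repr x
    rw [← this]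
    exact Submodule.sum_mem _ fun i _ =>
      Submodule.smul_mem_smul (h i) (Submodule.mem_top)

/-- Let `O` be a DVR with maximal ideal `μ`, `N` a finite free `O`-module, `H` a
commutative ring acting `O`-linearly on `N` via `φ : H → End_O(N)`, and `ψ : H → O` a
ring homomorphism. If `f ∈ N` satisfies `f ∉ μN` and `φ(U)f ≡ ψ(U)f (mod μⁿN)` for all
`U ∈ H`, then `ψ mod μⁿ` factors through the image algebra `T = φ(H)`: there is a ring
homomorphism `ψₙ : T → O/μⁿ` with `ψₙ ∘ φ = ψ mod μⁿ`. -/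
theorem stmt18 {O : Type*} [CommRing O] [IsDomain O] [IsDiscreteValuationRing O]
    {N : Type*} [AddCommGroup N] [Module O N] [Module.Free O N] [Module.Finite O N]
    {H : Type*} [CommRing H] (φ : H →+* Module.End O N) (ψ : H →+* O)
    (n : ℕ) (hn : 1 ≤ n) (f : N)
    (hfnd : f ∉ (IsLocalRing.maximalIdeal O) • (⊤ : Submodule O N))
    (hcong : ∀ U : H,
      φ U f - ψ U • f ∈ (IsLocalRing.maximalIdeal O ^ n) • (⊤ : Submodule O N)) :
    ∃ ψₙ : φ.range →+* O ⧸ (IsLocalRing.maximalIdeal O ^ n),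
      ∀ U : H, ψₙ ⟨φ U, ⟨U, rfl⟩⟩ = Ideal.Quotient.mk (IsLocalRing.maximalIdeal O ^ n) (ψ U) := by
  classical
  set μ := IsLocalRing.maximalIdeal O
  let b := Module.Free.chooseBasis O N
  -- some coordinate of f is a unit
  have hrepr : ¬ ∀ i, b.repr f i ∈ μ := by
    intro h
    exact hfnd ((mem_ideal_smul_top_iff_repr b μ f).2 h)
  push_neg at hrepr
  obtain ⟨i, hi⟩ := hrepr
  have hunit : IsUnit (b.repr f i) := by
    by_contra h
    exact hi (IsLocalRing.mem_maximalIdeal _ |>.2 h)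
  -- key: c • f ∈ μⁿ • ⊤ → c ∈ μⁿ
  have key : ∀ c : O, c • f ∈ (μ ^ n) • (⊤ : Submodule O N) → c ∈ μ ^ n := by
    intro c hc
    have := (mem_ideal_smul_top_iff_repr b (μ ^ n) _).1 hc i
    simp only [map_smul, Finsupp.smul_apply, smul_eq_mul] at this
    exact (Ideal.mul_unit_mem_iff_mem _ hunit).1 this
  have hker : ∀ U ∈ RingHom.ker φ, ψ U ∈ μ ^ n := by
    intro U hU
    have h0 : φ U = 0 := hU
    have := hcong U
    rw [h0] at this
    simp only [LinearMap.zero_apply, zero_sub] at this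
    have := (μ ^ n • (⊤ : Submodule O N)).neg_mem this
    rw [neg_neg] at this
    exact key _ this
  let e := RingHom.quotientKerEquivRange φ
  let ψq : H ⧸ RingHom.ker φ →+* O ⧸ μ ^ n :=
    Ideal.Quotient.lift _ ((Ideal.Quotient.mk (μ ^ n)).comp ψ)
      (fun U hU => by
        simpa [Ideal.Quotient.eq_zero_iff_mem] using hker U hU)
  refine ⟨ψq.comp (e.symm : φ.range →+* H ⧸ RingHom.ker φ), fun U => ?_⟩
  have he : e.symm ⟨φ U, ⟨U, rfl⟩⟩ = Ideal.Quotient.mk (RingHom.ker φ) U := by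
    have h2 : e ((Ideal.Quotient.mk (RingHom.ker φ)) U) = ⟨φ U, ⟨U, rfl⟩⟩ := rfl
    rw [← h2, RingEquiv.symm_apply_apply]
  simp only [RingHom.comp_apply, RingEquiv.coe_toRingHom, he]
  rfl
end
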